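/- arXiv:1205.2113 — 3 statements merged into one kernel-verified Lean document; each statement's English description precedes it below -/
import Mathlib

section
/- The volume of GL(n, Z_p) inside Mat(n, Z_p), with respect to the additive Haar measure vol on Mat(n, Q_p) normalized so that vol(Mat(n, Z_p)) = 1, equals ∏_{j=1}^n (1 - p^{-j}). -/
open MeasureTheory Matrix
open scoped ENNReal NNReal BigOperators

variable {p : ℕ} [Fact p.Prime]

noncomputable instance : MeasurableSpace ℚ_[p] := borel _
instance : BorelSpace ℚ_[p] := ⟨rfl⟩
noncomputable instance (n m : ℕ) : MeasurableSpace (Matrix (Fin n) (Fin m) ℚ_[p]) :=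
  (inferInstance : MeasurableSpace (Fin n → Fin m → ℚ_[p]))
instance (n m : ℕ) : BorelSpace (Matrix (Fin n) (Fin m) ℚ_[p]) :=
  (inferInstance : BorelSpace (Fin n → Fin m → ℚ_[p]))

/-- A matrix over `ℚ_[p]` lies in `GL(·, ℤ_p)`: it has integral entries and an
integral two-sided inverse. -/
def IsGLZp {m : Type*} [Fintype m] [DecidableEq m] (A : Matrix m m ℚ_[p]) : Prop :=
  (∀ i j, ‖A i j‖ ≤ 1) ∧ ∃ B : Matrix m m ℚ_[p],
    (∀ i j, ‖B i j‖ ≤ 1) ∧ A * B = 1 ∧ B * A = 1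

/-- Smith normal form over `ℤ_p`: `z = A * diagonal d * B` with `A, B ∈ GL(n, ℤ_p)`
and each diagonal entry `d j` equal to `0` or to a power `p^(-k_j)` of `p`. -/
def IsSmith {n : ℕ} (z : Matrix (Fin n) (Fin n) ℚ_[p])
    (A : Matrix (Fin n) (Fin n) ℚ_[p]) (d : Fin n → ℚ_[p])
    (B : Matrix (Fin n) (Fin n) ℚ_[p]) : Prop :=
  IsGLZp A ∧ IsGLZp B ∧ (∀ j, d j = 0 ∨ ∃ k : ℤ, d j = (p : ℚ_[p]) ^ (-k)) ∧
    z = A * Matrix.diagonal d * B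

open Classical in
/-- `γ(z) = ∏_{k_j > 0} p^{k_j}`, computed from a Smith normal form
`z = A diag(p^{-k_1},…,p^{-k_n}) B`: indeed `max(‖d j‖, 1) = p^{k_j}` when `k_j > 0`
and `= 1` otherwise. -/
noncomputable def gammaFn {n : ℕ} (z : Matrix (Fin n) (Fin n) ℚ_[p]) : ℝ :=
  if h : ∃ A d B, IsSmith z A d B then ∏ j, max ‖h.choose_spec.choose j‖ 1 else 1

/-- The constant `c(n, α) = ∏_{j=1}^n (1-p^{-α+n-j})/(1-p^{-α+n+j-1})`. -/
noncomputable def cConst (p n : ℕ) (α : ℝ) : ℝ :=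
  ∏ j ∈ Finset.range n,
    (1 - (p : ℝ) ^ (-α + n - (j + 1 : ℕ))) / (1 - (p : ℝ) ^ (-α + n + (j + 1 : ℕ) - 1))

/-- The Hua measure `μ_s^n` with density `c(n, s+2n)^{-1} γ(z)^{-s-2n}`
against the additive Haar measure `vol`. -/
noncomputable def huaMeasure (p : ℕ) [Fact p.Prime] (n : ℕ) (s : ℝ)
    (vol : Measure (Matrix (Fin n) (Fin n) ℚ_[p])) :
    Measure (Matrix (Fin n) (Fin n) ℚ_[p]) :=
  vol.withDensity fun z =>
    ENNReal.ofReal ((cConst p n (s + 2 * n))⁻¹ * gammaFn z ^ (-(s + 2 * n)))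

noncomputable def redE (x : ℚ_[p]) : ZMod p :=
  if h : ‖x‖ ≤ 1 then PadicInt.toZMod (⟨x, h⟩ : ℤ_[p]) else 0

lemma mem_max_iff (y : ℤ_[p]) : y ∈ IsLocalRing.maximalIdeal ℤ_[p] ↔ ‖y‖ < 1 := by
  rw [PadicInt.maximalIdeal_eq_span_p, Ideal.mem_span_singleton, ← PadicInt.norm_lt_one_iff_dvd]

lemma norm_lt_one_iff_le (y : ℤ_[p]) : ‖y‖ < 1 ↔ ‖y‖ ≤ (p : ℝ)⁻¹ := by
  have := PadicInt.norm_le_pow_iff_norm_lt_pow_add_one y (-1)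
  simp only [neg_add_cancel, zpow_zero, _root_.zpow_neg_one] at this
  exact this.symm

lemma toZMod_eq_iff (X : ℤ_[p]) (r : ZMod p) :
    PadicInt.toZMod X = r ↔ ‖X - (r.val : ℤ_[p])‖ < 1 := by
  have h1 : PadicInt.toZMod ((r.val : ℤ_[p])) = r := by
    rw [map_natCast]; exact ZMod.natCast_rightInverse r
  rw [← mem_max_iff, ← PadicInt.ker_toZMod, RingHom.mem_ker, map_sub, h1, sub_eq_zero]

lemma entry_iff (x : ℚ_[p]) (r : ZMod p) :
    ‖x - ((r.val : ℕ) : ℚ_[p])‖ ≤ (p : ℝ)⁻¹ ↔ ‖x‖ ≤ 1 ∧ redE x = r := by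
  have hc : ‖(((r.val : ℕ) : ℚ_[p]))‖ ≤ 1 := by
    have := Padic.norm_int_le_one (p := p) (r.val : ℤ)
    push_cast at this; exact this
  have hple : (p : ℝ)⁻¹ ≤ 1 := by
    rw [inv_le_one_iff₀]; right; exact_mod_cast (Fact.out : p.Prime).one_le
  constructor
  · intro h
    have hx : ‖x‖ ≤ 1 := by
      have := Padic.nonarchimedean (x - ((r.val : ℕ) : ℚ_[p])) ((r.val : ℕ) : ℚ_[p])
      rw [sub_add_cancel] at this
      exact this.trans (max_le (h.trans hple) hc)
    refine ⟨hx, ?_⟩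
    rw [redE, dif_pos hx, toZMod_eq_iff (⟨x, hx⟩ : ℤ_[p]), norm_lt_one_iff_le]
    have hco : ((⟨x, hx⟩ - (r.val : ℤ_[p]) : ℤ_[p]) : ℚ_[p]) = x - ((r.val : ℕ) : ℚ_[p]) := rfl
    rw [PadicInt.norm_def, hco]; exact h
  · rintro ⟨hx, hr⟩
    rw [redE, dif_pos hx, toZMod_eq_iff (⟨x, hx⟩ : ℤ_[p]), norm_lt_one_iff_le] at hr
    have hco : ((⟨x, hx⟩ - (r.val : ℤ_[p]) : ℤ_[p]) : ℚ_[p]) = x - ((r.val : ℕ) : ℚ_[p]) := rfl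
    rw [PadicInt.norm_def, hco] at hr; exact hr

variable (p) in
def Tset (n : ℕ) (r : Matrix (Fin n) (Fin n) (ZMod p)) : Set (Matrix (Fin n) (Fin n) ℚ_[p]) :=
  {z | ∀ i j, ‖z i j - ((r i j).val : ℚ_[p])‖ ≤ (p : ℝ)⁻¹}

lemma mem_Tset_iff {n : ℕ} (r : Matrix (Fin n) (Fin n) (ZMod p))
    (z : Matrix (Fin n) (Fin n) ℚ_[p]) :
    z ∈ Tset p n r ↔ (∀ i j, ‖z i j‖ ≤ 1) ∧ ∀ i j, redE (z i j) = r i j := by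
  simp only [Tset, Set.mem_setOf_eq, entry_iff]
  exact ⟨fun h => ⟨fun i j => (h i j).1, fun i j => (h i j).2⟩,
    fun h i j => ⟨h.1 i j, h.2 i j⟩⟩

lemma measurableSet_Tset {n : ℕ} (r : Matrix (Fin n) (Fin n) (ZMod p)) :
    MeasurableSet (Tset p n r) := by
  have h : Tset p n r = ⋂ i, ⋂ j, (fun z : Matrix (Fin n) (Fin n) ℚ_[p] => z i j) ⁻¹'
      Metric.closedBall (((r i j).val : ℚ_[p])) (p : ℝ)⁻¹ := by
    ext z
    simp [Tset, Metric.mem_closedBall, dist_eq_norm]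
  rw [h]
  refine MeasurableSet.iInter fun i => MeasurableSet.iInter fun j => ?_
  have hm : Measurable (fun z : Matrix (Fin n) (Fin n) ℚ_[p] => z i j) :=
    (measurable_pi_apply j).comp (measurable_pi_apply i)
  exact hm measurableSet_closedBall

lemma vol_Tset_eq {n : ℕ} (vol : Measure (Matrix (Fin n) (Fin n) ℚ_[p]))
    [vol.IsAddHaarMeasure] (r : Matrix (Fin n) (Fin n) (ZMod p)) :
    vol (Tset p n r) = vol (Tset p n 0) := by
  have h : Tset p n r = (fun z : Matrix (Fin n) (Fin n) ℚ_[p] =>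
      z + Matrix.of fun i j => -(((r i j).val : ℚ_[p]))) ⁻¹' Tset p n 0 := by
    ext z
    simp [Tset, Matrix.add_apply, ZMod.val_zero, sub_eq_add_neg]
  rw [h, measure_preimage_add_right]

lemma iUnion_Tset {n : ℕ} :
    (⋃ r : Matrix (Fin n) (Fin n) (ZMod p), Tset p n r) =
      {z : Matrix (Fin n) (Fin n) ℚ_[p] | ∀ i j, ‖z i j‖ ≤ 1} := by
  ext z
  simp only [Set.mem_iUnion, mem_Tset_iff, Set.mem_setOf_eq]
  constructor
  · rintro ⟨r, hr, -⟩; exact hr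
  · intro hz; exact ⟨Matrix.of fun i j => redE (z i j), hz, fun i j => rfl⟩

lemma Tset_disjoint {n : ℕ} :
    Pairwise (Function.onFun Disjoint (fun r : Matrix (Fin n) (Fin n) (ZMod p) => Tset p n r)) := by
  intro r r' hrr'
  rw [Function.onFun, Set.disjoint_left]
  intro z hz hz'
  rw [mem_Tset_iff] at hz hz'
  exact hrr' (by ext i j; rw [← hz.2 i j, hz'.2 i j])

lemma mapMatrix_coe_injective {n : ℕ} :
    Function.Injective ((PadicInt.Coe.ringHom (p := p)).mapMatrix :
      Matrix (Fin n) (Fin n) ℤ_[p] → Matrix (Fin n) (Fin n) ℚ_[p]) := by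
  intro M N h
  ext i j
  have := congrFun (congrFun (congrArg (fun M => (M : Matrix (Fin n) (Fin n) ℚ_[p])) h) i) j
  exact PadicInt.ext this

lemma isGLZp'_iff {n : ℕ} (z : Matrix (Fin n) (Fin n) ℚ_[p]) (hz : ∀ i j, ‖z i j‖ ≤ 1) :
    IsGLZp z ↔ IsUnit (Matrix.det (Matrix.of fun i j => redE (z i j))) := by
  classical
  set Z : Matrix (Fin n) (Fin n) ℤ_[p] := Matrix.of fun i j => (⟨z i j, hz i j⟩ : ℤ_[p]) with hZ
  have hzZ : (PadicInt.Coe.ringHom (p := p)).mapMatrix Z = z := by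
    ext i j; rfl
  have hred : (Matrix.of fun i j => redE (z i j)) = (PadicInt.toZMod (p := p)).mapMatrix Z := by
    ext i j
    simp only [Matrix.of_apply, RingHom.mapMatrix_apply, Matrix.map_apply, hZ, redE,
      dif_pos (hz i j)]
    rfl
  rw [hred]
  constructor
  · rintro ⟨-, B, hB, hAB, hBA⟩
    set ZB : Matrix (Fin n) (Fin n) ℤ_[p] := Matrix.of fun i j => (⟨B i j, hB i j⟩ : ℤ_[p])
    have hZB : (PadicInt.Coe.ringHom (p := p)).mapMatrix ZB = B := by ext i j; rfl
    have h1 : Z * ZB = 1 := by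
      apply mapMatrix_coe_injective
      rw [_root_.map_mul, _root_.map_one, hzZ, hZB, hAB]
    have := congrArg Matrix.det (congrArg (PadicInt.toZMod (p := p)).mapMatrix h1)
    rw [_root_.map_mul, _root_.map_one, Matrix.det_mul, Matrix.det_one] at this
    exact IsUnit.of_mul_eq_one _ this
  · intro h
    rw [← RingHom.map_det] at h
    have hdet : IsUnit Z.det := by
      by_contra hcon
      have : Z.det ∈ IsLocalRing.maximalIdeal ℤ_[p] := by
        rw [IsLocalRing.mem_maximalIdeal]; exact hcon
      rw [← PadicInt.ker_toZMod, RingHom.mem_ker] at this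
      rw [this] at h
      exact one_ne_zero (isUnit_zero_iff.mp h).symm
    obtain ⟨u, hu⟩ := (Matrix.isUnit_iff_isUnit_det Z).2 hdet
    set V : Matrix (Fin n) (Fin n) ℤ_[p] := ((u⁻¹ : (Matrix (Fin n) (Fin n) ℤ_[p])ˣ) : Matrix (Fin n) (Fin n) ℤ_[p]) with hVdef
    have huV : Z * V = 1 := by rw [← hu, hVdef]; exact u.mul_inv
    have hVu : V * Z = 1 := by rw [← hu, hVdef]; exact u.inv_mul
    refine ⟨hz, (PadicInt.Coe.ringHom (p := p)).mapMatrix V, fun i j => ?_, ?_, ?_⟩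
    · exact PadicInt.norm_le_one (V i j)
    · rw [← hzZ, ← _root_.map_mul, huV, _root_.map_one]
    · rw [← hzZ, ← _root_.map_mul, hVu, _root_.map_one]

lemma card_unit_det {n : ℕ} :
    Nat.card {A : Matrix (Fin n) (Fin n) (ZMod p) // IsUnit A.det} =
      ∏ i : Fin n, (p ^ n - p ^ (i : ℕ)) := by
  have e : {A : Matrix (Fin n) (Fin n) (ZMod p) // IsUnit A.det} ≃ GL (Fin n) (ZMod p) :=
    { toFun := fun A => ((Matrix.isUnit_iff_isUnit_det _).2 A.2).unit
      invFun := fun u => ⟨u, (Matrix.isUnit_iff_isUnit_det _).1 u.isUnit⟩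
      left_inv := fun A => Subtype.ext ((Matrix.isUnit_iff_isUnit_det _).2 A.2).unit_spec
      right_inv := fun u => Units.ext ((Matrix.isUnit_iff_isUnit_det _).2 ((Matrix.isUnit_iff_isUnit_det _).1 u.isUnit)).unit_spec }
  rw [Nat.card_congr e, Matrix.card_GL_field]
  simp [ZMod.card]

lemma final_arith (n : ℕ) :
    ((∏ i : Fin n, (p ^ n - p ^ (i : ℕ)) : ℕ) : ℝ≥0∞) * ((p : ℝ≥0∞) ^ (n * n))⁻¹ =
      ∏ j ∈ Finset.range n, (1 - ((p : ℝ≥0∞))⁻¹ ^ (j + 1)) := by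
  have hpne : (p : ℝ≥0∞) ≠ 0 := by
    exact_mod_cast Nat.cast_ne_zero.2 (Fact.out : p.Prime).pos.ne'
  have hptop : (p : ℝ≥0∞) ≠ ∞ := ENNReal.natCast_ne_top p
  have hp0 : ((p : ℝ≥0∞) ^ (n * n)) ≠ 0 := pow_ne_zero _ hpne
  have hptop2 : ((p : ℝ≥0∞) ^ (n * n)) ≠ ∞ := ENNReal.pow_ne_top hptop
  have hptopn : ((p : ℝ≥0∞) ^ n) ≠ ∞ := ENNReal.pow_ne_top hptop
  have hN : (∏ j ∈ Finset.range n, (1 - ((p : ℝ≥0∞))⁻¹ ^ (j + 1))) * (p : ℝ≥0∞) ^ (n * n) =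
      ((∏ i : Fin n, (p ^ n - p ^ (i : ℕ)) : ℕ) : ℝ≥0∞) := by
    rw [Nat.cast_prod]
    have hpw : ((p : ℝ≥0∞) ^ (n * n)) = ∏ _j ∈ Finset.range n, (p : ℝ≥0∞) ^ n := by
      rw [Finset.prod_const, Finset.card_range, ← pow_mul]
    rw [hpw, ← Finset.prod_mul_distrib,
      show (∏ i : Fin n, (((p : ℕ) ^ n - p ^ (i : ℕ) : ℕ) : ℝ≥0∞)) =
        ∏ i ∈ Finset.range n, (((p : ℕ) ^ n - p ^ i : ℕ) : ℝ≥0∞) from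
          Fin.prod_univ_eq_prod_range (fun i => (((p : ℕ) ^ n - p ^ i : ℕ) : ℝ≥0∞)) n,
      ← Finset.prod_range_reflect (fun i => (((p : ℕ) ^ n - p ^ i : ℕ) : ℝ≥0∞)) n]
    refine Finset.prod_congr rfl fun j hj => ?_
    rw [Finset.mem_range] at hj
    have h1 : (p : ℝ≥0∞)⁻¹ ^ (j + 1) * (p : ℝ≥0∞) ^ n = (p : ℝ≥0∞) ^ (n - 1 - j) := by
      calc (p : ℝ≥0∞)⁻¹ ^ (j + 1) * (p : ℝ≥0∞) ^ n
          = (p : ℝ≥0∞)⁻¹ ^ (j + 1) * ((p : ℝ≥0∞) ^ (j + 1) * (p : ℝ≥0∞) ^ (n - 1 - j)) := by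
            rw [← pow_add, show j + 1 + (n - 1 - j) = n from by omega]
        _ = ((p : ℝ≥0∞)⁻¹ * (p : ℝ≥0∞)) ^ (j + 1) * (p : ℝ≥0∞) ^ (n - 1 - j) := by
            rw [mul_pow, mul_assoc]
        _ = (p : ℝ≥0∞) ^ (n - 1 - j) := by
            rw [ENNReal.inv_mul_cancel hpne hptop, one_pow, one_mul]
    rw [ENNReal.sub_mul (fun _ _ => hptopn), one_mul, h1, ENNReal.natCast_sub]
    push_cast
    rfl
  rw [← hN, mul_assoc, ENNReal.mul_inv_cancel hp0 hptop2, mul_one]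

/-- `vol(GL(n, ℤ_p)) = ∏_{j=1}^n (1 - p^{-j})` for the additive Haar
measure on `Mat(n, ℚ_p)` normalized so that `vol(Mat(n, ℤ_p)) = 1`. -/
theorem volume_GLZp (n : ℕ) (vol : Measure (Matrix (Fin n) (Fin n) ℚ_[p]))
    [vol.IsAddHaarMeasure]
    (hnorm : vol {z : Matrix (Fin n) (Fin n) ℚ_[p] | ∀ i j, ‖z i j‖ ≤ 1} = 1) :
    vol {z : Matrix (Fin n) (Fin n) ℚ_[p] | IsGLZp z} =
      ∏ j ∈ Finset.range n, (1 - ((p : ℝ≥0∞))⁻¹ ^ (j + 1)) := by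
  classical
  have hpne : (p : ℝ≥0∞) ≠ 0 := Nat.cast_ne_zero.2 (Fact.out : p.Prime).pos.ne'
  have hptop2 : ((p : ℝ≥0∞) ^ (n * n)) ≠ ∞ := ENNReal.pow_ne_top (ENNReal.natCast_ne_top p)
  have hp0 : ((p : ℝ≥0∞) ^ (n * n)) ≠ 0 := pow_ne_zero _ hpne
  have hcard : Fintype.card (Matrix (Fin n) (Fin n) (ZMod p)) = p ^ (n * n) := by
    show Fintype.card (Fin n → Fin n → ZMod p) = _
    simp [ZMod.card, ← pow_mul]
  have hsum : (1 : ℝ≥0∞) = (p : ℝ≥0∞) ^ (n * n) * vol (Tset p n 0) := by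
    rw [← hnorm, ← iUnion_Tset, measure_iUnion Tset_disjoint (fun r => measurableSet_Tset r),
      tsum_fintype, Finset.sum_congr rfl fun r _ => vol_Tset_eq vol r, Finset.sum_const,
      Finset.card_univ, hcard, nsmul_eq_mul, Nat.cast_pow]
  have hT0 : vol (Tset p n 0) = ((p : ℝ≥0∞) ^ (n * n))⁻¹ := by
    rw [← one_mul (vol (Tset p n 0)), ← ENNReal.inv_mul_cancel hp0 hptop2, mul_assoc, ← hsum,
      mul_one]
  set U : Finset (Matrix (Fin n) (Fin n) (ZMod p)) := Finset.univ.filter fun r => IsUnit r.det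
    with hU
  have hGL : {z : Matrix (Fin n) (Fin n) ℚ_[p] | IsGLZp z} = ⋃ r ∈ U, Tset p n r := by
    ext z
    simp only [Set.mem_setOf_eq, Set.mem_iUnion, exists_prop, hU, Finset.mem_filter,
      Finset.mem_univ, true_and]
    constructor
    · intro hz
      exact ⟨Matrix.of fun i j => redE (z i j), (isGLZp'_iff z hz.1).1 hz,
        (mem_Tset_iff _ _).2 ⟨hz.1, fun i j => rfl⟩⟩
    · rintro ⟨r, hr, hzr⟩
      rw [mem_Tset_iff] at hzr
      have hre : (Matrix.of fun i j => redE (z i j)) = r := by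
        ext i j; exact hzr.2 i j
      exact (isGLZp'_iff z hzr.1).2 (hre ▸ hr)
  rw [hGL, measure_biUnion_finset (Tset_disjoint.set_pairwise _)
      (fun r _ => measurableSet_Tset r),
    Finset.sum_congr rfl fun r _ => (vol_Tset_eq vol r).trans hT0, Finset.sum_const, nsmul_eq_mul]
  have hUcard : (U.card : ℝ≥0∞) = ((∏ i : Fin n, (p ^ n - p ^ (i : ℕ)) : ℕ) : ℝ≥0∞) := by
    have h2 : U.card = Nat.card {A : Matrix (Fin n) (Fin n) (ZMod p) // IsUnit A.det} := by
      rw [Nat.card_eq_fintype_card, Fintype.card_subtype]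
    rw [h2, card_unit_det]
  rw [hUcard, final_arith]
end

section
/- For invertible z ∈ GL(n, Q_p), γ(z) equals the covolume vol(z·Z_p^n + Z_p^n), the Haar measure of the lattice generated by z·Z_p^n and Z_p^n (interpreted via the index with the normalization vol(Z_p^n) = 1 and scaling of Haar measure). -/
open MeasureTheory Matrix
open scoped ENNReal NNReal BigOperators

variable {p : ℕ} [Fact p.Prime]

noncomputable abbrev padCoe (p : ℕ) [Fact p.Prime] : ℤ_[p] →+* ℚ_[p] := PadicInt.Coe.ringHom

lemma isGLZp_map {n : ℕ} {X Y : Matrix (Fin n) (Fin n) ℤ_[p]}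
    (h1 : X * Y = 1) (h2 : Y * X = 1) : IsGLZp (X.map (padCoe p)) := by
  have hn : ∀ (Z : Matrix (Fin n) (Fin n) ℤ_[p]) (i j : Fin n), ‖Z.map (padCoe p) i j‖ ≤ 1 := by
    intro Z i j
    exact PadicInt.norm_le_one (Z i j)
  refine ⟨hn X, Y.map (padCoe p), hn Y, ?_, ?_⟩
  · rw [← Matrix.map_mul, h1, Matrix.map_one _ (map_zero _) (map_one _)]
  · rw [← Matrix.map_mul, h2, Matrix.map_one _ (map_zero _) (map_one _)]

theorem exists_isSmith {n : ℕ} (z : Matrix (Fin n) (Fin n) ℚ_[p]) (hz : IsUnit z) :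
    ∃ A d B, IsSmith z A d B := by
  classical
  have hp1 : (1:ℝ) < p := by exact_mod_cast (Fact.out : p.Prime).one_lt
  have hp0 : (p:ℚ_[p]) ≠ 0 := by
    exact_mod_cast Nat.cast_ne_zero.mpr (Fact.out : p.Prime).ne_zero
  -- choose N making p^N * z integral
  have hent : ∀ ij : Fin n × Fin n, ∃ N : ℕ, ‖z ij.1 ij.2‖ ≤ (p:ℝ)^N := fun ij =>
    (pow_unbounded_of_one_lt ‖z ij.1 ij.2‖ hp1).imp fun N h => h.le
  choose Nf hNf using hent
  set N : ℕ := Finset.univ.sup Nf with hN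
  have hbound : ∀ i j, ‖(p:ℚ_[p])^N * z i j‖ ≤ 1 := by
    intro i j
    rw [norm_mul, norm_pow, Padic.norm_p]
    have h1 : ‖z i j‖ ≤ (p:ℝ)^N :=
      le_trans (hNf (i,j)) (pow_le_pow_right₀ hp1.le (Finset.le_sup (Finset.mem_univ (i,j))))
    calc (p:ℝ)⁻¹ ^ N * ‖z i j‖ ≤ (p:ℝ)⁻¹ ^ N * (p:ℝ)^N := by
          gcongr
      _ = 1 := by rw [← mul_pow, inv_mul_cancel₀ (by positivity), one_pow]
  set w : Matrix (Fin n) (Fin n) ℤ_[p] := Matrix.of fun i j => (⟨_, hbound i j⟩ : ℤ_[p]) with hw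
  have hwmap : w.map (padCoe p) = ((p:ℚ_[p])^N) • z := by
    ext i j; simp only [hw, Matrix.map_apply, Matrix.smul_apply, smul_eq_mul, Matrix.of_apply]; rfl
  -- injectivity of mulVecLin w
  have hdet : IsUnit z.det := (Matrix.isUnit_iff_isUnit_det z).mp hz
  have hzinv := Matrix.nonsing_inv_mul z hdet
  have hginj : Function.Injective w.mulVecLin := by
    rw [← LinearMap.ker_eq_bot, LinearMap.ker_eq_bot']
    intro x hx
    have h2 : (w.map (padCoe p)).mulVec ((padCoe p) ∘ x) = 0 := by
      funext i
      rw [← RingHom.map_mulVec]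
      rw [Matrix.mulVecLin_apply] at hx
      rw [hx]
      simp
    rw [hwmap, Matrix.smul_mulVec, smul_eq_zero] at h2
    have h3 : z.mulVec ((padCoe p) ∘ x) = 0 := by
      rcases h2 with h | h
      · exact absurd h (pow_ne_zero _ hp0)
      · exact h
    have h4 : (padCoe p) ∘ x = 0 := by
      have := congrArg (fun v => z⁻¹.mulVec v) h3
      simpa [Matrix.mulVec_mulVec, hzinv] using this
    funext i
    have : (padCoe p) (x i) = 0 := congrFun h4 i
    exact Subtype.coe_injective this
  set g := w.mulVecLin with hg
  obtain ⟨e, he⟩ : ∃ e : (Fin n → ℤ_[p]) ≃ₗ[ℤ_[p]] LinearMap.range g,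
      ∀ x, ((e x : Fin n → ℤ_[p])) = g x :=
    ⟨LinearEquiv.ofInjective g hginj, fun x => by simp [LinearEquiv.ofInjective_apply]⟩
  obtain ⟨m, bM, bN, f, a, snf⟩ := Submodule.smithNormalForm (Pi.basisFun ℤ_[p] (Fin n)) (LinearMap.range g)
  have hmn : m = n := by
    simpa using Fintype.card_congr ((bN.map e.symm).indexEquiv (Pi.basisFun ℤ_[p] (Fin n)))
  subst hmn
  set σ : Fin m ≃ Fin m := Equiv.ofBijective f (Finite.injective_iff_bijective.mp f.injective)
  have ha : ∀ i, a i ≠ 0 := by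
    intro i h0
    apply Module.Basis.ne_zero bN i
    have h := snf i
    rw [h0, zero_smul] at h
    exact Subtype.coe_injective (by simpa using h)
  set s := Pi.basisFun ℤ_[p] (Fin m) with hs
  set c : Module.Basis (Fin m) ℤ_[p] (Fin m → ℤ_[p]) := bM.reindex σ.symm with hc
  have hceq : ∀ i, c i = bM (f i) := by
    intro i; rw [hc, Module.Basis.reindex_apply, Equiv.symm_symm]; rfl
  set A0 : Matrix (Fin m) (Fin m) ℤ_[p] := s.toMatrix c with hA0
  set hEq : (Fin m → ℤ_[p]) ≃ₗ[ℤ_[p]] (Fin m → ℤ_[p]) := e ≪≫ₗ bN.equivFun with hhEq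
  set B0 : Matrix (Fin m) (Fin m) ℤ_[p] := LinearMap.toMatrix' (hEq : (Fin m → ℤ_[p]) →ₗ[ℤ_[p]] (Fin m → ℤ_[p])) with hB0
  have hAmul : ∀ x : Fin m → ℤ_[p], A0 *ᵥ x = ∑ i, x i • c i := by
    intro x
    funext r
    simp only [Matrix.mulVec, dotProduct, hA0, Module.Basis.toMatrix_apply, hs,
      Pi.basisFun_repr, Finset.sum_apply, Pi.smul_apply, smul_eq_mul]
    exact Finset.sum_congr rfl fun j _ => mul_comm _ _
  have hBmul : ∀ x : Fin m → ℤ_[p], B0 *ᵥ x = hEq x := by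
    intro x
    rw [hB0, ← Matrix.toLin'_apply, Matrix.toLin'_toMatrix']
    rfl
  have key : w = A0 * Matrix.diagonal a * B0 := by
    apply Matrix.toLin'.injective
    apply LinearMap.ext
    intro x
    rw [Matrix.toLin'_apply, Matrix.toLin'_apply, ← Matrix.mulVec_mulVec, ← Matrix.mulVec_mulVec]
    rw [hBmul]
    have h1 : w *ᵥ x = (e x : Fin m → ℤ_[p]) := (he x).symm
    have h2 : (e x : Fin m → ℤ_[p]) = ∑ i, (hEq x) i • ((bN i : Fin m → ℤ_[p])) := by
      have := bN.sum_repr (e x)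
      have h3 := congrArg (Submodule.subtype _) this
      simp only [map_sum, _root_.map_smul, Submodule.coe_subtype] at h3
      rw [← h3]
      refine Finset.sum_congr rfl fun i _ => ?_
      have hxi : (hEq x) i = bN.repr (e x) i := by
        simp [hhEq, LinearEquiv.trans_apply, Module.Basis.equivFun_apply]
      rw [hxi]
    rw [h1, h2]
    have h4 : Matrix.diagonal a *ᵥ hEq x = fun i => a i * hEq x i := by
      funext i; rw [Matrix.mulVec_diagonal]
    rw [h4, hAmul]
    refine Finset.sum_congr rfl fun i _ => ?_
    rw [snf i, ← hceq i, smul_smul, mul_comm (hEq x i) (a i)]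
  -- invertibility
  have hA0inv : A0 * c.toMatrix s = 1 := Module.Basis.toMatrix_mul_toMatrix_flip _ _
  have hA0inv' : c.toMatrix s * A0 = 1 := Module.Basis.toMatrix_mul_toMatrix_flip _ _
  set B0' : Matrix (Fin m) (Fin m) ℤ_[p] := LinearMap.toMatrix' (hEq.symm : (Fin m → ℤ_[p]) →ₗ[ℤ_[p]] (Fin m → ℤ_[p])) with hB0'
  have hBid : (hEq : (Fin m → ℤ_[p]) →ₗ[ℤ_[p]] _) ∘ₗ (hEq.symm : (Fin m → ℤ_[p]) →ₗ[ℤ_[p]] _) = LinearMap.id :=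
    LinearMap.ext fun x => hEq.apply_symm_apply x
  have hBid' : (hEq.symm : (Fin m → ℤ_[p]) →ₗ[ℤ_[p]] _) ∘ₗ (hEq : (Fin m → ℤ_[p]) →ₗ[ℤ_[p]] _) = LinearMap.id :=
    LinearMap.ext fun x => hEq.symm_apply_apply x
  have hB0inv : B0 * B0' = 1 := by
    rw [hB0, hB0', ← LinearMap.toMatrix'_comp, hBid, LinearMap.toMatrix'_id]
  have hB0inv' : B0' * B0 = 1 := by
    rw [hB0, hB0', ← LinearMap.toMatrix'_comp, hBid', LinearMap.toMatrix'_id]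
  -- factor units out of a
  set u : Fin m → ℤ_[p]ˣ := fun j => PadicInt.unitCoeff (ha j) with hu
  set v : Fin m → ℕ := fun j => (a j).valuation with hv
  have haspec : ∀ j, a j = (u j : ℤ_[p]) * (p:ℤ_[p]) ^ v j := fun j => PadicInt.unitCoeff_spec (ha j)
  set A1 : Matrix (Fin m) (Fin m) ℤ_[p] := A0 * Matrix.diagonal (fun j => (u j : ℤ_[p])) with hA1
  set A1' : Matrix (Fin m) (Fin m) ℤ_[p] := Matrix.diagonal (fun j => (((u j)⁻¹ : ℤ_[p]ˣ) : ℤ_[p])) * c.toMatrix s with hA1'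
  have hA1inv : A1 * A1' = 1 := by
    rw [hA1, hA1', Matrix.mul_assoc, ← Matrix.mul_assoc (Matrix.diagonal _),
      Matrix.diagonal_mul_diagonal]
    simp only [Units.mul_inv]
    rw [Matrix.diagonal_one, Matrix.one_mul, hA0inv]
  have hA1inv' : A1' * A1 = 1 := by
    rw [hA1, hA1', Matrix.mul_assoc, ← Matrix.mul_assoc (c.toMatrix s), hA0inv',
      Matrix.one_mul, Matrix.diagonal_mul_diagonal]
    simp only [Units.inv_mul]
    rw [Matrix.diagonal_one]
  have hadiag : Matrix.diagonal a =
      Matrix.diagonal (fun j => (u j : ℤ_[p])) * Matrix.diagonal (fun j => (p:ℤ_[p]) ^ v j) := by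
    rw [Matrix.diagonal_mul_diagonal]
    exact congrArg Matrix.diagonal (funext haspec)
  have key2 : w = A1 * Matrix.diagonal (fun j => (p:ℤ_[p]) ^ v j) * B0 := by
    rw [key, hadiag, hA1]
    simp only [Matrix.mul_assoc]
  -- transfer to ℚ_[p]
  set d : Fin m → ℚ_[p] := fun j => (p:ℚ_[p]) ^ ((v j : ℤ) - N) with hd
  refine ⟨A1.map (padCoe p), d, B0.map (padCoe p), isGLZp_map hA1inv hA1inv',
    isGLZp_map hB0inv hB0inv', fun j => Or.inr ⟨N - v j, by rw [hd, neg_sub]⟩, ?_⟩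
  have hmap : w.map (padCoe p) =
      A1.map (padCoe p) * Matrix.diagonal (fun j => (p:ℚ_[p]) ^ (v j : ℕ)) * B0.map (padCoe p) := by
    have hfun : (fun j => (padCoe p) ((p:ℤ_[p]) ^ v j)) = fun j => (p:ℚ_[p]) ^ (v j : ℕ) := by
      funext j; simp
    rw [key2, Matrix.map_mul, Matrix.map_mul, Matrix.diagonal_map (map_zero _), hfun]
  have hz' : z = ((p:ℚ_[p])^N)⁻¹ • (w.map (padCoe p)) := by
    rw [hwmap, smul_smul, inv_mul_cancel₀ (pow_ne_zero _ hp0), one_smul]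
  rw [hz', hmap, ← Matrix.smul_mul, ← Matrix.mul_smul]
  congr 2
  funext i j
  simp only [Matrix.smul_apply, Matrix.diagonal_apply, smul_eq_mul]
  split
  · rw [hd, ← zpow_natCast (p:ℚ_[p]) (v i), ← zpow_natCast (p:ℚ_[p]) N, ← _root_.zpow_neg,
      ← zpow_add₀ hp0]
    congr 1
    omega
  · rw [mul_zero]

lemma mulVec_norm_le {n : ℕ} {X : Matrix (Fin n) (Fin n) ℚ_[p]} (hX : ∀ i j, ‖X i j‖ ≤ 1)
    {x : Fin n → ℚ_[p]} (hx : ∀ j, ‖x j‖ ≤ 1) : ∀ i, ‖(X *ᵥ x) i‖ ≤ 1 := by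
  intro i
  show ‖∑ j, X i j * x j‖ ≤ 1
  refine IsUltrametricDist.norm_sum_le_of_forall_le_of_nonneg zero_le_one fun j _ => ?_
  calc ‖X i j * x j‖ = ‖X i j‖ * ‖x j‖ := norm_mul _ _
    _ ≤ 1 := mul_le_one₀ (hX i j) (norm_nonneg _) (hx j)

set_option maxHeartbeats 1000000 in
lemma exists_digit (m : ℕ) (x : ℚ_[p]) (hx : ‖x‖ ≤ (p:ℝ)^(m:ℤ)) :
    ∃ a : ℕ, a < p ^ m ∧ ‖x - (a : ℚ_[p]) * (p:ℚ_[p])^(-(m:ℤ))‖ ≤ 1 := by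
  have hp0 : (p:ℚ_[p]) ≠ 0 := Nat.cast_ne_zero.mpr (Fact.out : p.Prime).ne_zero
  have hpR : (0:ℝ) < p := by exact_mod_cast (Fact.out : p.Prime).pos
  have hy : ‖(p:ℚ_[p])^(m:ℤ) * x‖ ≤ 1 := by
    rw [norm_mul, Padic.norm_p_zpow]
    calc (p:ℝ)^(-(m:ℤ)) * ‖x‖ ≤ (p:ℝ)^(-(m:ℤ)) * (p:ℝ)^(m:ℤ) := by gcongr
      _ = 1 := by rw [← zpow_add₀ (ne_of_gt hpR), neg_add_cancel, zpow_zero]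
  set y : ℤ_[p] := ⟨_, hy⟩ with hyy
  have hpz : (p:ℚ_[p])^(-(m:ℤ)) * (p:ℚ_[p])^(m:ℤ) = 1 := by
    rw [← zpow_add₀ hp0, neg_add_cancel, zpow_zero]
  refine ⟨y.appr m, PadicInt.appr_lt _ _, ?_⟩
  have h1 : ‖y - (y.appr m : ℤ_[p])‖ ≤ (p:ℝ)^(-(m:ℤ)) := by
    have hsp := PadicInt.appr_spec m y
    simpa using (PadicInt.norm_le_pow_iff_mem_span_pow _ m).mpr hsp
  have h2 : x - ((y.appr m : ℕ) : ℚ_[p]) * (p:ℚ_[p])^(-(m:ℤ)) =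
      (p:ℚ_[p])^(-(m:ℤ)) * ((y : ℚ_[p]) - ((y.appr m : ℕ) : ℚ_[p])) := by
    have hyx : (y : ℚ_[p]) = (p:ℚ_[p])^(m:ℤ) * x := rfl
    rw [hyx, mul_sub, ← mul_assoc, hpz, one_mul,
      mul_comm ((p:ℚ_[p])^(-(m:ℤ))) (((y.appr m : ℕ) : ℚ_[p]))]
  rw [h2, norm_mul, Padic.norm_p_zpow, neg_neg]
  have h3 : ‖(y : ℚ_[p]) - ((y.appr m : ℕ) : ℚ_[p])‖ ≤ (p:ℝ)^(-(m:ℤ)) := by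
    have : ((y - (y.appr m : ℤ_[p]) : ℤ_[p]) : ℚ_[p]) = (y : ℚ_[p]) - ((y.appr m : ℕ) : ℚ_[p]) := by
      push_cast; ring
    rw [← this, ← PadicInt.norm_def]
    exact h1
  calc (p:ℝ)^(m:ℤ) * ‖(y : ℚ_[p]) - ((y.appr m : ℕ) : ℚ_[p])‖
      ≤ (p:ℝ)^(m:ℤ) * (p:ℝ)^(-(m:ℤ)) := by gcongr
    _ = 1 := by rw [← zpow_add₀ (ne_of_gt hpR), add_neg_cancel, zpow_zero]

set_option maxHeartbeats 1000000 in
lemma digit_unique {m a b : ℕ} (ha : a < p ^ m) (hb : b < p ^ m)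
    (h : ‖((a:ℚ_[p]) - (b:ℚ_[p])) * (p:ℚ_[p])^(-(m:ℤ))‖ ≤ 1) : a = b := by
  have hp0 : (p:ℚ_[p]) ≠ 0 := Nat.cast_ne_zero.mpr (Fact.out : p.Prime).ne_zero
  have hpz : (p:ℚ_[p])^(-(m:ℤ)) * (p:ℚ_[p])^(m:ℤ) = 1 := by
    rw [← zpow_add₀ hp0, neg_add_cancel, zpow_zero]
  have h2 : ‖((((a:ℤ) - (b:ℤ) : ℤ)) : ℚ_[p])‖ ≤ (p:ℝ)^(-(m:ℤ)) := by
    have hcast : ((((a:ℤ) - (b:ℤ) : ℤ)) : ℚ_[p]) =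
        ((a:ℚ_[p]) - (b:ℚ_[p])) * (p:ℚ_[p])^(-(m:ℤ)) * (p:ℚ_[p])^(m:ℤ) := by
      rw [mul_assoc, hpz, mul_one]; push_cast; ring
    rw [hcast, norm_mul, Padic.norm_p_zpow]
    calc ‖((a:ℚ_[p]) - (b:ℚ_[p])) * (p:ℚ_[p])^(-(m:ℤ))‖ * (p:ℝ)^(-(m:ℤ))
        ≤ 1 * (p:ℝ)^(-(m:ℤ)) := by gcongr
      _ = (p:ℝ)^(-(m:ℤ)) := one_mul _
  have hdvd : ((p:ℤ))^m ∣ (a:ℤ) - (b:ℤ) := (Padic.norm_int_le_pow_iff_dvd ((a:ℤ) - (b:ℤ)) m).mp h2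
  have ha' : (a:ℤ) < (p:ℤ)^m := by exact_mod_cast ha
  have hb' : (b:ℤ) < (p:ℤ)^m := by exact_mod_cast hb
  have h0 : (a:ℤ) - (b:ℤ) = 0 :=
    Int.eq_zero_of_abs_lt_dvd hdvd (abs_sub_lt_iff.mpr ⟨by omega, by omega⟩)
  omega

set_option maxHeartbeats 1000000 in
theorem vol_eq {n : ℕ} (vol : Measure (Fin n → ℚ_[p])) [vol.IsAddHaarMeasure]
    (hnorm : vol {v : Fin n → ℚ_[p] | ∀ i, ‖v i‖ ≤ 1} = 1)
    (z A : Matrix (Fin n) (Fin n) ℚ_[p]) (d : Fin n → ℚ_[p])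
    (B : Matrix (Fin n) (Fin n) ℚ_[p]) (hz : IsUnit z) (hS : IsSmith z A d B) :
    vol {w : Fin n → ℚ_[p] | ∃ u v : Fin n → ℚ_[p],
        (∀ i, ‖u i‖ ≤ 1) ∧ (∀ i, ‖v i‖ ≤ 1) ∧ w = z.mulVec u + v} =
      ENNReal.ofReal (∏ j, max ‖d j‖ 1) := by
  classical
  obtain ⟨hA, hB, hd, hfac⟩ := hS
  have hAn := hA.1
  obtain ⟨A', hA'n, hAA', hA'A⟩ := hA.2
  have hBn := hB.1
  obtain ⟨B', hB'n, hBB', hB'B⟩ := hB.2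
  have hp1 : (1:ℝ) < p := by exact_mod_cast (Fact.out : p.Prime).one_lt
  have hdet : z.det ≠ 0 := ((Matrix.isUnit_iff_isUnit_det z).mp hz).ne_zero
  have hdne : ∀ j, d j ≠ 0 := by
    intro j hj
    apply hdet
    rw [hfac, Matrix.det_mul, Matrix.det_mul, Matrix.det_diagonal,
      Finset.prod_eq_zero (Finset.mem_univ j) hj, mul_zero, zero_mul]
  choose k hk using fun j => (hd j).resolve_left (hdne j)
  set m : Fin n → ℕ := fun j => (k j).toNat with hm
  have hdnorm : ∀ j, ‖d j‖ = (p:ℝ)^(k j) := by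
    intro j; rw [hk j, Padic.norm_p_zpow, neg_neg]
  have hmax : ∀ j, max ‖d j‖ 1 = (p:ℝ)^((m j : ℤ)) := by
    intro j
    have hmj : m j = (k j).toNat := by rw [hm]
    rcases le_or_gt (k j) 0 with h | h
    · have h0 : m j = 0 := by omega
      rw [h0, max_eq_right]
      · norm_num
      · rw [hdnorm j]
        exact zpow_le_one_of_nonpos₀ hp1.le h
    · have h0 : (m j : ℤ) = k j := by omega
      rw [h0, max_eq_left, hdnorm j]
      rw [hdnorm j]
      exact one_le_zpow₀ hp1.le h.le
  set M : Set (Fin n → ℚ_[p]) := {v | ∀ i, ‖v i‖ ≤ 1} with hM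
  set ρ : ((j : Fin n) → Fin (p ^ m j)) → (Fin n → ℚ_[p]) :=
    fun c j => ((c j : ℕ) : ℚ_[p]) * (p:ℚ_[p])^(-(m j : ℤ)) with hρ
  set T : ((j : Fin n) → Fin (p ^ m j)) → Set (Fin n → ℚ_[p]) :=
    fun c => (fun y => A *ᵥ (ρ c) + y) '' M with hT
  have hSeq : {w : Fin n → ℚ_[p] | ∃ u v : Fin n → ℚ_[p],
      (∀ i, ‖u i‖ ≤ 1) ∧ (∀ i, ‖v i‖ ≤ 1) ∧ w = z.mulVec u + v} = ⋃ c, T c := by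
    ext w
    simp only [Set.mem_setOf_eq, Set.mem_iUnion, hT, Set.mem_image, hM, Set.mem_setOf_eq]
    constructor
    · rintro ⟨u, v, hu, hv, rfl⟩
      set x : Fin n → ℚ_[p] := Matrix.diagonal d *ᵥ (B *ᵥ u) + A' *ᵥ v with hx
      have hxb : ∀ j, ‖x j‖ ≤ (p:ℝ)^((m j : ℤ)) := by
        intro j
        have h1 : ‖(Matrix.diagonal d *ᵥ (B *ᵥ u)) j‖ ≤ max ‖d j‖ 1 := by
          rw [Matrix.mulVec_diagonal, norm_mul]
          calc ‖d j‖ * ‖(B *ᵥ u) j‖ ≤ ‖d j‖ * 1 := by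
                gcongr
                exact mulVec_norm_le hBn hu j
            _ ≤ max ‖d j‖ 1 := by rw [mul_one]; exact le_max_left _ _
        have h2 : ‖(A' *ᵥ v) j‖ ≤ max ‖d j‖ 1 :=
          le_trans (mulVec_norm_le hA'n hv j) (le_max_right _ _)
        calc ‖x j‖ ≤ max ‖(Matrix.diagonal d *ᵥ (B *ᵥ u)) j‖ ‖(A' *ᵥ v) j‖ := by
              rw [hx]; exact Padic.nonarchimedean _ _
          _ ≤ max ‖d j‖ 1 := max_le h1 h2
          _ = (p:ℝ)^((m j : ℤ)) := hmax j
      have hdig : ∀ j, ∃ a : ℕ, a < p ^ m j ∧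
          ‖x j - (a : ℚ_[p]) * (p:ℚ_[p])^(-(m j : ℤ))‖ ≤ 1 :=
        fun j => exists_digit (m j) (x j) (hxb j)
      choose aa haa1 haa2 using hdig
      refine ⟨fun j => ⟨aa j, haa1 j⟩, A *ᵥ (x - ρ (fun j => ⟨aa j, haa1 j⟩)),
        fun i => mulVec_norm_le hAn (fun j => ?_) i, ?_⟩
      · simpa [hρ, Pi.sub_apply] using haa2 j
      · rw [← Matrix.mulVec_add, add_sub_cancel, hx, Matrix.mulVec_add,
          Matrix.mulVec_mulVec, Matrix.mulVec_mulVec, Matrix.mulVec_mulVec,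
          hAA', Matrix.one_mulVec, ← hfac]
    · rintro ⟨c, y, hy, rfl⟩
      set u0 : Fin n → ℚ_[p] := fun j => if m j = 0 then 0 else ((c j : ℕ) : ℚ_[p]) with hu0
      have hρc : ρ c = Matrix.diagonal d *ᵥ u0 := by
        funext j
        rw [Matrix.mulVec_diagonal]
        simp only [hρ, hu0]
        by_cases h0 : m j = 0
        · have hc0 : (c j : ℕ) = 0 := by
            have hlt := (c j).isLt
            have hone : p ^ m j = 1 := by rw [h0, pow_zero]
            omega
          simp [h0, hc0]
        · have hkj : k j = (m j : ℤ) := by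
            have hmj : m j = (k j).toNat := by rw [hm]
            omega
          rw [if_neg h0, hk j, hkj, mul_comm]
      refine ⟨B' *ᵥ u0, y, fun i => mulVec_norm_le hB'n (fun j => ?_) i, hy, ?_⟩
      · simp only [hu0]
        split
        · simp
        · have : (((c j : ℕ) : ℤ) : ℚ_[p]) = ((c j : ℕ) : ℚ_[p]) := by push_cast; ring
          rw [← this]
          exact Padic.norm_int_le_one _
      · rw [Matrix.mulVec_mulVec, hfac, Matrix.mul_assoc (A * Matrix.diagonal d) B B',
          hBB', Matrix.mul_one, hρc, Matrix.mulVec_mulVec]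
  have hTrepr : ∀ c, T c = (fun y => (-(A *ᵥ ρ c)) + y) ⁻¹' M := by
    intro c
    ext w
    simp only [hT, Set.mem_image, Set.mem_preimage]
    constructor
    · rintro ⟨y, hy, rfl⟩
      simpa [neg_add_cancel_left] using hy
    · intro h
      exact ⟨-(A *ᵥ ρ c) + w, h, by abel⟩
  have hMmeas : MeasurableSet M := by
    have : M = ⋂ i, (fun v : Fin n → ℚ_[p] => v i) ⁻¹' (Metric.closedBall 0 1) := by
      ext v
      simp [hM, Metric.mem_closedBall, dist_zero_right]
    rw [this]
    exact MeasurableSet.iInter fun i =>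
      (Metric.isClosed_closedBall.preimage (continuous_apply i)).measurableSet
  have hTmeas : ∀ c, MeasurableSet (T c) := by
    intro c
    rw [hTrepr c]
    exact hMmeas.preimage (measurable_const_add _)
  have hTvol : ∀ c, vol (T c) = 1 := by
    intro c
    rw [hTrepr c, measure_preimage_add]
    exact hnorm
  have hdisj : Pairwise (Function.onFun Disjoint T) := by
    intro c c' hne
    rw [Function.onFun, Set.disjoint_left]
    rintro w ⟨y1, hy1, rfl⟩ ⟨y2, hy2, heq⟩
    apply hne
    have h1 : A *ᵥ (ρ c - ρ c') = y2 - y1 := by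
      rw [Matrix.mulVec_sub]
      linear_combination -heq
    have hδ : ρ c - ρ c' = A' *ᵥ (y2 - y1) := by
      rw [← h1, Matrix.mulVec_mulVec, hA'A, Matrix.one_mulVec]
    have hδM : ∀ j, ‖(ρ c - ρ c') j‖ ≤ 1 := by
      intro j
      rw [hδ]
      refine mulVec_norm_le hA'n (fun i => ?_) j
      calc ‖(y2 - y1) i‖ = ‖y2 i + (- y1 i)‖ := by rw [Pi.sub_apply, sub_eq_add_neg]
        _ ≤ max ‖y2 i‖ ‖-y1 i‖ := Padic.nonarchimedean _ _
        _ ≤ 1 := max_le (hy2 i) (by rw [norm_neg]; exact hy1 i)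
    funext j
    have hj := hδM j
    simp only [Pi.sub_apply, hρ] at hj
    have h3 : ‖(((c j : ℕ) : ℚ_[p]) - ((c' j : ℕ) : ℚ_[p])) * (p:ℚ_[p])^(-(m j : ℤ))‖ ≤ 1 := by
      rw [sub_mul]
      exact hj
    exact Fin.ext (digit_unique (c j).isLt (c' j).isLt h3)
  rw [hSeq, measure_iUnion hdisj hTmeas]
  have hsum : ∑' c, vol (T c) = ((∏ j, p ^ m j : ℕ) : ℝ≥0∞) := by
    rw [tsum_fintype]
    simp only [hTvol]
    rw [Finset.sum_const, Finset.card_univ, nsmul_eq_mul, mul_one]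
    congr 1
    simp [Fintype.card_pi]
  rw [hsum]
  have hprod : (∏ j, max ‖d j‖ 1) = ((∏ j, p ^ m j : ℕ) : ℝ) := by
    push_cast
    exact Finset.prod_congr rfl fun j _ => by rw [hmax j, ← zpow_natCast]
  rw [hprod, ENNReal.ofReal_natCast]

/-- for invertible `z`, `γ(z) = vol(z·ℤ_p^n + ℤ_p^n)`. -/
theorem gamma_eq_vol_sum_lattice (n : ℕ) (vol : Measure (Fin n → ℚ_[p]))
    [vol.IsAddHaarMeasure]
    (hnorm : vol {v : Fin n → ℚ_[p] | ∀ i, ‖v i‖ ≤ 1} = 1)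
    (z : Matrix (Fin n) (Fin n) ℚ_[p]) (hz : IsUnit z) :
    vol {w : Fin n → ℚ_[p] | ∃ u v : Fin n → ℚ_[p],
        (∀ i, ‖u i‖ ≤ 1) ∧ (∀ i, ‖v i‖ ≤ 1) ∧ w = z.mulVec u + v} =
      ENNReal.ofReal (gammaFn z) := by
  have hex : ∃ A d B, IsSmith z A d B := exists_isSmith z hz
  have hg : gammaFn z = ∏ j, max ‖hex.choose_spec.choose j‖ 1 := by
    simp only [gammaFn]
    rw [dif_pos hex]
  rw [hg]
  obtain ⟨B, hS⟩ := hex.choose_spec.choose_spec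
  exact vol_eq vol hnorm z _ _ B hz hS
end

section
/- The group GL(2n, Z_p) is generated by the subgroup P of block upper-triangular matrices [[a,b],[0,d]] (a, d ∈ GL(n, Z_p), b ∈ Mat(n, Z_p)) together with the single element J = [[0,1],[1,0]]. -/
open MeasureTheory Matrix
open scoped ENNReal NNReal BigOperators

variable {p : ℕ} [Fact p.Prime]

namespace GLGenAux

/-- All entries are `p`-adic integers. -/
def IsInt {ι : Type*} (M : Matrix ι ι ℚ_[p]) : Prop := ∀ i j, ‖M i j‖ ≤ 1

lemma norm_sum_le_one {κ : Type*} (s : Finset κ) (f : κ → ℚ_[p])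
    (h : ∀ i ∈ s, ‖f i‖ ≤ 1) : ‖∑ i ∈ s, f i‖ ≤ 1 := by
  classical
  induction s using Finset.induction with
  | empty => simp
  | @insert a s ha ih =>
    rw [Finset.sum_insert ha]
    exact le_trans (Padic.nonarchimedean _ _)
      (max_le (h _ (Finset.mem_insert_self _ _))
        (ih fun i hi => h i (Finset.mem_insert_of_mem hi)))

lemma norm_sum_lt_one {κ : Type*} (s : Finset κ) (f : κ → ℚ_[p])
    (h : ∀ i ∈ s, ‖f i‖ < 1) : ‖∑ i ∈ s, f i‖ < 1 := by
  classical
  induction s using Finset.induction with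
  | empty => simp
  | @insert a s ha ih =>
    rw [Finset.sum_insert ha]
    exact lt_of_le_of_lt (Padic.nonarchimedean _ _)
      (max_lt (h _ (Finset.mem_insert_self _ _))
        (ih fun i hi => h i (Finset.mem_insert_of_mem hi)))

lemma isInt_one {ι : Type*} [Fintype ι] [DecidableEq ι] :
    IsInt (1 : Matrix ι ι ℚ_[p]) := by
  intro i j
  rw [Matrix.one_apply]
  split_ifs <;> simp

lemma isInt_mul {ι : Type*} [Fintype ι] {A B : Matrix ι ι ℚ_[p]}
    (hA : IsInt A) (hB : IsInt B) : IsInt (A * B) := by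
  intro i j
  rw [Matrix.mul_apply]
  refine norm_sum_le_one _ _ fun k _ => ?_
  rw [norm_mul]
  exact mul_le_one₀ (hA i k) (norm_nonneg _) (hB k j)

lemma isInt_transvection {ι : Type*} [Fintype ι] [DecidableEq ι] (i j : ι)
    {c : ℚ_[p]} (hc : ‖c‖ ≤ 1) : IsInt (transvection i j c) := by
  intro a b
  refine le_trans (le_of_eq (by rw [Matrix.transvection, Matrix.add_apply]))
    (le_trans (Padic.nonarchimedean _ _) (max_le ?_ ?_))
  · rw [Matrix.one_apply]; split_ifs <;> simp
  · rw [Matrix.single]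
    simp only [Matrix.of_apply]
    split_ifs <;> simp [hc]


section core
variable {ι : Type*} [Fintype ι] [DecidableEq ι]

/-- The transvection as a unit. -/
noncomputable def tUnit {i j : ι} (h : i ≠ j) (c : ℚ_[p]) : (Matrix ι ι ℚ_[p])ˣ :=
  ⟨transvection i j c, transvection i j (-c),
   by rw [Matrix.transvection_mul_transvection_same _ _ h, add_neg_cancel,
     Matrix.transvection_zero],
   by rw [Matrix.transvection_mul_transvection_same _ _ h, neg_add_cancel,
     Matrix.transvection_zero]⟩

/-- Generators: integral transvections and diagonal matrices of units. -/
def T (ι : Type*) [Fintype ι] [DecidableEq ι] : Set (Matrix ι ι ℚ_[p])ˣ :=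
  {u | (∃ i j c, i ≠ j ∧ ‖c‖ ≤ 1 ∧ (u : Matrix ι ι ℚ_[p]) = transvection i j c) ∨
    ∃ d : ι → ℚ_[p], (∀ i, ‖d i‖ = 1) ∧ (u : Matrix ι ι ℚ_[p]) = diagonal d}

lemma coe_inv_eq (u : (Matrix ι ι ℚ_[p])ˣ) (B : Matrix ι ι ℚ_[p])
    (h : (u : Matrix ι ι ℚ_[p]) * B = 1) : ((u⁻¹ : (Matrix ι ι ℚ_[p])ˣ) : Matrix ι ι ℚ_[p]) = B := by
  calc ((u⁻¹ : (Matrix ι ι ℚ_[p])ˣ) : Matrix ι ι ℚ_[p])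
      = ↑u⁻¹ * ((u : Matrix ι ι ℚ_[p]) * B) := by rw [h, mul_one]
    _ = B := by rw [← mul_assoc, Units.inv_mul, one_mul]

/-- The subgroup of units with integral entries and integral inverse. -/
def intSub (ι : Type*) [Fintype ι] [DecidableEq ι] : Subgroup (Matrix ι ι ℚ_[p])ˣ where
  carrier := {g | IsInt (g : Matrix ι ι ℚ_[p]) ∧
    IsInt ((g⁻¹ : (Matrix ι ι ℚ_[p])ˣ) : Matrix ι ι ℚ_[p])}
  one_mem' := ⟨by simpa using (isInt_one (ι := ι)), by simpa using (isInt_one (ι := ι))⟩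
  mul_mem' := by
    rintro a b ⟨ha1, ha2⟩ ⟨hb1, hb2⟩
    refine ⟨?_, ?_⟩
    · rw [Units.val_mul]; exact isInt_mul ha1 hb1
    · rw [_root_.mul_inv_rev, Units.val_mul]; exact isInt_mul hb2 ha2
  inv_mem' := by
    rintro a ⟨ha1, ha2⟩
    exact ⟨ha2, by rw [inv_inv]; exact ha1⟩

lemma tUnit_mem_T {i j : ι} (h : i ≠ j) {c : ℚ_[p]} (hc : ‖c‖ ≤ 1) :
    tUnit h c ∈ T (p := p) ι :=
  Or.inl ⟨i, j, c, h, hc, rfl⟩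

lemma T_subset_intSub : T (p := p) ι ⊆ (intSub (p := p) ι : Set (Matrix ι ι ℚ_[p])ˣ) := by
  rintro u (⟨i, j, c, hij, hc, hu⟩ | ⟨d, hd, hu⟩)
  · have hinv : ((u⁻¹ : (Matrix ι ι ℚ_[p])ˣ) : Matrix ι ι ℚ_[p]) = transvection i j (-c) := by
      apply coe_inv_eq
      rw [hu, Matrix.transvection_mul_transvection_same _ _ hij, add_neg_cancel,
        Matrix.transvection_zero]
    constructor
    · rw [hu]; exact isInt_transvection i j hc
    · rw [hinv]; exact isInt_transvection i j (by rw [norm_neg]; exact hc)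
  · have hd0 : ∀ i, d i ≠ 0 := fun i hi => by
      have h := hd i; rw [hi] at h; simp at h
    have hinv : ((u⁻¹ : (Matrix ι ι ℚ_[p])ˣ) : Matrix ι ι ℚ_[p]) = diagonal (fun i => (d i)⁻¹) := by
      apply coe_inv_eq
      rw [hu, Matrix.diagonal_mul_diagonal]
      rw [show (fun i => d i * (d i)⁻¹) = fun _ => (1 : ℚ_[p]) from
        funext fun i => mul_inv_cancel₀ (hd0 i), Matrix.diagonal_one]
    constructor
    · rw [hu]; intro a b
      rw [Matrix.diagonal_apply]
      split_ifs with hab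
      · exact le_of_eq (hd a)
      · simp
    · rw [hinv]; intro a b
      rw [Matrix.diagonal_apply]
      split_ifs with hab
      · rw [norm_inv, hd a]; norm_num
      · simp

lemma closure_T_le_intSub : Subgroup.closure (T (p := p) ι) ≤ intSub (p := p) ι :=
  (Subgroup.closure_le _).mpr T_subset_intSub

lemma exists_norm_one_col (g : (Matrix ι ι ℚ_[p])ˣ) (hg : g ∈ intSub (p := p) ι) (j : ι) :
    ∃ i, ‖(g : Matrix ι ι ℚ_[p]) i j‖ = 1 := by
  by_contra hcon
  push_neg at hcon
  have h1 : (((g⁻¹ : (Matrix ι ι ℚ_[p])ˣ) : Matrix ι ι ℚ_[p]) * (g : Matrix ι ι ℚ_[p])) j j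
      = 1 := by
    rw [← Units.val_mul, inv_mul_cancel]
    simp [Matrix.one_apply]
  rw [Matrix.mul_apply] at h1
  have hlt : ‖∑ k, ((g⁻¹ : (Matrix ι ι ℚ_[p])ˣ) : Matrix ι ι ℚ_[p]) j k *
      (g : Matrix ι ι ℚ_[p]) k j‖ < 1 := by
    refine norm_sum_lt_one _ _ fun k _ => ?_
    rw [norm_mul]
    calc ‖((g⁻¹ : (Matrix ι ι ℚ_[p])ˣ) : Matrix ι ι ℚ_[p]) j k‖ * ‖(g : Matrix ι ι ℚ_[p]) k j‖
        ≤ 1 * ‖(g : Matrix ι ι ℚ_[p]) k j‖ :=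
          mul_le_mul_of_nonneg_right (hg.2 j k) (norm_nonneg _)
      _ = ‖(g : Matrix ι ι ℚ_[p]) k j‖ := one_mul _
      _ < 1 := lt_of_le_of_ne (hg.1 k j) (hcon k)
  rw [h1] at hlt
  simp at hlt

/-- Units from a list of integral transvection structures, lying in the closure of `T`. -/
lemma listUnit (L : List (TransvectionStruct ι ℚ_[p])) (hL : ∀ t ∈ L, ‖t.c‖ ≤ 1) :
    ∃ u : (Matrix ι ι ℚ_[p])ˣ,
      (u : Matrix ι ι ℚ_[p]) = (L.map TransvectionStruct.toMatrix).prod ∧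
      u ∈ Subgroup.closure (T (p := p) ι) := by
  induction L with
  | nil => exact ⟨1, by simp, one_mem _⟩
  | cons t L ih =>
    obtain ⟨u, hu, hmem⟩ := ih fun s hs => hL s (List.mem_cons_of_mem _ hs)
    refine ⟨tUnit t.hij t.c * u, ?_, ?_⟩
    · rw [Units.val_mul, hu]
      simp [tUnit, TransvectionStruct.toMatrix]
    · exact mul_mem (Subgroup.subset_closure
        (tUnit_mem_T t.hij (hL t List.mem_cons_self))) hmem


end core

lemma mem_intSub_iff {ι : Type*} [Fintype ι] [DecidableEq ι] (g : (Matrix ι ι ℚ_[p])ˣ) :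
    g ∈ intSub (p := p) ι ↔ IsInt (g : Matrix ι ι ℚ_[p]) ∧
      IsInt ((g⁻¹ : (Matrix ι ι ℚ_[p])ˣ) : Matrix ι ι ℚ_[p]) := Iff.rfl

lemma closure_map {G H : Type*} [Group G] [Group H] (f : G →* H) (S : Set G) (Tt : Set H)
    (hf : ∀ s ∈ S, f s ∈ Subgroup.closure Tt) {g : G} (hg : g ∈ Subgroup.closure S) :
    f g ∈ Subgroup.closure Tt :=
  (Subgroup.closure_le ((Subgroup.closure Tt).comap f)).mpr hf hg

/-- The block-inclusion monoid hom on units. -/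
noncomputable def blockHom (m : ℕ) : (Matrix (Fin m) (Fin m) ℚ_[p])ˣ →* (Matrix (Fin m ⊕ Unit) (Fin m ⊕ Unit) ℚ_[p])ˣ where
  toFun u :=
    ⟨fromBlocks (u : Matrix (Fin m) (Fin m) ℚ_[p]) 0 0 1,
     fromBlocks ((u⁻¹ : (Matrix (Fin m) (Fin m) ℚ_[p])ˣ) : Matrix (Fin m) (Fin m) ℚ_[p]) 0 0 1,
     by
      rw [fromBlocks_multiply]
      simp only [Matrix.mul_zero, Matrix.zero_mul, add_zero, zero_add, Matrix.one_mul,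
        Matrix.mul_one]
      rw [← Units.val_mul, mul_inv_cancel, Units.val_one, fromBlocks_one],
     by
      rw [fromBlocks_multiply]
      simp only [Matrix.mul_zero, Matrix.zero_mul, add_zero, zero_add, Matrix.one_mul,
        Matrix.mul_one]
      rw [← Units.val_mul, inv_mul_cancel, Units.val_one, fromBlocks_one]⟩
  map_one' := by ext : 1; simp [fromBlocks_one]
  map_mul' u v := by ext : 1; simp [fromBlocks_multiply]

lemma blockHom_coe (m : ℕ) (u : (Matrix (Fin m) (Fin m) ℚ_[p])ˣ) :
    ((blockHom (p := p) m u : (Matrix (Fin m ⊕ Unit) (Fin m ⊕ Unit) ℚ_[p])ˣ) :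
      Matrix (Fin m ⊕ Unit) (Fin m ⊕ Unit) ℚ_[p]) =
    fromBlocks (u : Matrix (Fin m) (Fin m) ℚ_[p]) 0 0 1 := rfl

lemma blockHom_inv_coe (m : ℕ) (u : (Matrix (Fin m) (Fin m) ℚ_[p])ˣ) :
    (((blockHom (p := p) m u)⁻¹ : (Matrix (Fin m ⊕ Unit) (Fin m ⊕ Unit) ℚ_[p])ˣ) :
      Matrix (Fin m ⊕ Unit) (Fin m ⊕ Unit) ℚ_[p]) =
    fromBlocks ((u⁻¹ : (Matrix (Fin m) (Fin m) ℚ_[p])ˣ) : Matrix (Fin m) (Fin m) ℚ_[p]) 0 0 1 := rfl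

lemma blockHom_T (m : ℕ) (u : (Matrix (Fin m) (Fin m) ℚ_[p])ˣ) (hu : u ∈ T (p := p) (Fin m)) :
    blockHom (p := p) m u ∈ T (p := p) (Fin m ⊕ Unit) := by
  rcases hu with ⟨i, j, c, hij, hc, hco⟩ | ⟨d, hd, hco⟩
  · refine Or.inl ⟨Sum.inl i, Sum.inl j, c, by simp [hij], hc, ?_⟩
    rw [blockHom_coe, hco]
    have := TransvectionStruct.toMatrix_sumInl (p := Unit) (⟨i, j, hij, c⟩ : TransvectionStruct (Fin m) ℚ_[p])
    simp only [TransvectionStruct.sumInl, TransvectionStruct.toMatrix] at this ⊢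
    rw [← this]
  · refine Or.inr ⟨Sum.elim d (fun _ => 1), fun i => by cases i <;> simp [hd], ?_⟩
    rw [blockHom_coe, hco, ← Matrix.fromBlocks_diagonal, Matrix.diagonal_one]

/-- The inductive step over `Fin m ⊕ Unit`. -/
lemma step (m : ℕ)
    (IH : ∀ g : (Matrix (Fin m) (Fin m) ℚ_[p])ˣ, g ∈ intSub (Fin m) →
      g ∈ Subgroup.closure (T (p := p) (Fin m)))
    (g : (Matrix (Fin m ⊕ Unit) (Fin m ⊕ Unit) ℚ_[p])ˣ)
    (hg : g ∈ intSub (Fin m ⊕ Unit)) :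
    g ∈ Subgroup.closure (T (p := p) (Fin m ⊕ Unit)) := by
  classical
  -- Step A : make the pivot have norm 1
  obtain ⟨g₁, hg₁, hpiv, himp⟩ :
      ∃ g₁, g₁ ∈ intSub (Fin m ⊕ Unit) ∧
        ‖(g₁ : Matrix (Fin m ⊕ Unit) (Fin m ⊕ Unit) ℚ_[p]) (Sum.inr ()) (Sum.inr ())‖ = 1 ∧
        (g₁ ∈ Subgroup.closure (T (p := p) (Fin m ⊕ Unit)) →
          g ∈ Subgroup.closure (T (p := p) (Fin m ⊕ Unit))) := by
    by_cases hp : ‖(g : Matrix (Fin m ⊕ Unit) (Fin m ⊕ Unit) ℚ_[p]) (Sum.inr ()) (Sum.inr ())‖ = 1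
    · exact ⟨g, hg, hp, fun h => h⟩
    · obtain ⟨i, hi⟩ := exists_norm_one_col g hg (Sum.inr ())
      have hne : (Sum.inr () : Fin m ⊕ Unit) ≠ i := by
        rintro rfl; exact hp hi
      have htmem : tUnit hne 1 ∈ T (p := p) (Fin m ⊕ Unit) :=
        tUnit_mem_T hne (by norm_num)
      refine ⟨tUnit hne 1 * g, mul_mem (closure_T_le_intSub (Subgroup.subset_closure htmem)) hg,
        ?_, ?_⟩
      · have hcoe : ((tUnit hne 1 * g : (Matrix (Fin m ⊕ Unit) (Fin m ⊕ Unit) ℚ_[p])ˣ) :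
            Matrix (Fin m ⊕ Unit) (Fin m ⊕ Unit) ℚ_[p]) =
            transvection (Sum.inr ()) i 1 * (g : Matrix (Fin m ⊕ Unit) (Fin m ⊕ Unit) ℚ_[p]) :=
          rfl
        rw [hcoe, Matrix.transvection_mul_apply_same, one_mul]
        have hlt : ‖(g : Matrix (Fin m ⊕ Unit) (Fin m ⊕ Unit) ℚ_[p]) (Sum.inr ()) (Sum.inr ())‖
            < 1 := lt_of_le_of_ne (((mem_intSub_iff g).mp hg).1 (Sum.inr ()) (Sum.inr ())) hp
        rw [Padic.add_eq_max_of_ne (by rw [hi]; exact ne_of_lt hlt)]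
        simp [hi, le_of_lt hlt]
      · intro h
        have : g = (tUnit hne 1)⁻¹ * (tUnit hne 1 * g) := by group
        rw [this]
        exact mul_mem (inv_mem (Subgroup.subset_closure htmem)) h
  -- Step B : clear the last row and column
  set M := (g₁ : Matrix (Fin m ⊕ Unit) (Fin m ⊕ Unit) ℚ_[p]) with hM
  have hMint : IsInt M := ((mem_intSub_iff g₁).mp hg₁).1
  have hMne : M (Sum.inr ()) (Sum.inr ()) ≠ 0 := by
    intro h; rw [h] at hpiv; simp at hpiv
  let LC : List (TransvectionStruct (Fin m ⊕ Unit) ℚ_[p]) :=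
    List.ofFn fun i : Fin m =>
      ⟨Sum.inl i, Sum.inr (), by simp, -M (Sum.inl i) (Sum.inr ()) / M (Sum.inr ()) (Sum.inr ())⟩
  let LR : List (TransvectionStruct (Fin m ⊕ Unit) ℚ_[p]) :=
    List.ofFn fun i : Fin m =>
      ⟨Sum.inr (), Sum.inl i, by simp, -M (Sum.inr ()) (Sum.inl i) / M (Sum.inr ()) (Sum.inr ())⟩
  have hbound : ∀ (a : Fin m ⊕ Unit) (b : Fin m ⊕ Unit),
      ‖-M a b / M (Sum.inr ()) (Sum.inr ())‖ ≤ 1 := by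
    intro a b
    rw [norm_div, norm_neg, hpiv, div_one]
    exact hMint a b
  obtain ⟨uL, huL, hmemL⟩ := listUnit LC (by
    intro t ht
    obtain ⟨i, rfl⟩ := Set.mem_range.mp ((List.mem_ofFn' _ _).mp ht)
    exact hbound _ _)
  obtain ⟨uR, huR, hmemR⟩ := listUnit LR (by
    intro t ht
    obtain ⟨i, rfl⟩ := Set.mem_range.mp ((List.mem_ofFn' _ _).mp ht)
    exact hbound _ _)
  have hLC : (LC.map TransvectionStruct.toMatrix).prod = (Matrix.Pivot.listTransvecCol M).prod := by
    congr 1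
    simp [LC, Matrix.Pivot.listTransvecCol, List.map_ofFn, Function.comp_def]
  have hLR : (LR.map TransvectionStruct.toMatrix).prod = (Matrix.Pivot.listTransvecRow M).prod := by
    congr 1
    simp [LR, Matrix.Pivot.listTransvecRow, List.map_ofFn, Function.comp_def]
  set g₂ := uL * g₁ * uR with hg₂
  have hg₂coe : (g₂ : Matrix (Fin m ⊕ Unit) (Fin m ⊕ Unit) ℚ_[p]) =
      (Matrix.Pivot.listTransvecCol M).prod * M * (Matrix.Pivot.listTransvecRow M).prod := by
    rw [hg₂]
    push_cast
    rw [huL, huR, hLC, hLR]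
  have h2bd : IsTwoBlockDiagonal (g₂ : Matrix (Fin m ⊕ Unit) (Fin m ⊕ Unit) ℚ_[p]) := by
    rw [hg₂coe]
    exact Matrix.Pivot.isTwoBlockDiagonal_listTransvecCol_mul_mul_listTransvecRow M hMne
  have hg₂int : g₂ ∈ intSub (Fin m ⊕ Unit) :=
    mul_mem (mul_mem (closure_T_le_intSub hmemL) hg₁) (closure_T_le_intSub hmemR)
  set N := (g₂ : Matrix (Fin m ⊕ Unit) (Fin m ⊕ Unit) ℚ_[p]) with hNdef
  set N' := ((g₂⁻¹ : (Matrix (Fin m ⊕ Unit) (Fin m ⊕ Unit) ℚ_[p])ˣ) :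
    Matrix (Fin m ⊕ Unit) (Fin m ⊕ Unit) ℚ_[p]) with hN'def
  have hNint : IsInt N := ((mem_intSub_iff g₂).mp hg₂int).1
  have hN'int : IsInt N' := ((mem_intSub_iff g₂).mp hg₂int).2
  set A := toBlocks₁₁ N with hA
  set D := toBlocks₂₂ N with hD
  have hN : N = fromBlocks A 0 0 D := by
    conv_lhs => rw [← fromBlocks_toBlocks N]
    rw [h2bd.1, h2bd.2]
  have hNN' : N * N' = 1 := by rw [hNdef, hN'def, ← Units.val_mul, mul_inv_cancel, Units.val_one]
  have hN'N : N' * N = 1 := by rw [hNdef, hN'def, ← Units.val_mul, inv_mul_cancel, Units.val_one]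
  set P := toBlocks₁₁ N' with hP
  set S := toBlocks₂₂ N' with hS
  have hN' : N' = fromBlocks P (toBlocks₁₂ N') (toBlocks₂₁ N') S := (fromBlocks_toBlocks N').symm
  rw [hN, hN'] at hNN' hN'N
  rw [fromBlocks_multiply, ← fromBlocks_one] at hNN' hN'N
  obtain ⟨hAP, -, -, hDS⟩ := fromBlocks_inj.mp hNN'
  obtain ⟨hPA, -, -, hSD⟩ := fromBlocks_inj.mp hN'N
  simp only [Matrix.zero_mul, Matrix.mul_zero, add_zero, zero_add] at hAP hDS hPA hSD
  -- the upper-left block as a unit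
  set gA : (Matrix (Fin m) (Fin m) ℚ_[p])ˣ := ⟨A, P, hAP, hPA⟩ with hgA
  have hgAint : gA ∈ intSub (Fin m) := by
    rw [mem_intSub_iff]
    constructor
    · intro i j
      exact hNint (Sum.inl i) (Sum.inl j)
    · intro i j
      exact hN'int (Sum.inl i) (Sum.inl j)
  have hgAmem := IH gA hgAint
  have hφgA : blockHom (p := p) m gA ∈ Subgroup.closure (T (p := p) (Fin m ⊕ Unit)) :=
    closure_map (blockHom (p := p) m) _ _
      (fun s hs => Subgroup.subset_closure (blockHom_T m s hs)) hgAmem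
  -- the remaining diagonal piece
  have hDval : D () () * S () () = 1 := by
    have := congrArg (fun X => X () ()) hDS
    simpa [Matrix.mul_apply, Matrix.one_apply] using this
  have hDnorm : ‖D () ()‖ = 1 := by
    have h1 : ‖D () ()‖ * ‖S () ()‖ = 1 := by
      rw [← norm_mul, hDval, norm_one]
    have hDle : ‖D () ()‖ ≤ 1 := hNint (Sum.inr ()) (Sum.inr ())
    have hSle : ‖S () ()‖ ≤ 1 := hN'int (Sum.inr ()) (Sum.inr ())
    nlinarith [norm_nonneg (D () ()), norm_nonneg (S () ())]
  set dU := (blockHom (p := p) m gA)⁻¹ * g₂ with hdU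
  have hdUcoe : (dU : Matrix (Fin m ⊕ Unit) (Fin m ⊕ Unit) ℚ_[p]) =
      diagonal (Sum.elim (fun _ => (1 : ℚ_[p])) (fun _ => D () ())) := by
    have hDdiag : D = diagonal (fun _ => D () ()) := by
      ext i j
      rcases i; rcases j
      simp [Matrix.diagonal_apply]
    rw [hdU, Units.val_mul, blockHom_inv_coe]
    show fromBlocks ((gA⁻¹ : (Matrix (Fin m) (Fin m) ℚ_[p])ˣ) : Matrix (Fin m) (Fin m) ℚ_[p]) 0 0 1 * N = _
    have : ((gA⁻¹ : (Matrix (Fin m) (Fin m) ℚ_[p])ˣ) : Matrix (Fin m) (Fin m) ℚ_[p]) = P := rfl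
    rw [this, hN, fromBlocks_multiply]
    simp only [Matrix.zero_mul, Matrix.mul_zero, add_zero, zero_add, Matrix.one_mul, hPA]
    rw [hDdiag, show (1 : Matrix (Fin m) (Fin m) ℚ_[p]) = diagonal (fun _ => (1:ℚ_[p])) from
      Matrix.diagonal_one.symm, Matrix.fromBlocks_diagonal]
    simp [Matrix.diagonal_apply]
  have hdUmem : dU ∈ T (p := p) (Fin m ⊕ Unit) := by
    refine Or.inr ⟨_, fun i => ?_, hdUcoe⟩
    rcases i with i | i
    · simp
    · simpa using hDnorm
  have hg₂mem : g₂ ∈ Subgroup.closure (T (p := p) (Fin m ⊕ Unit)) := by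
    have : g₂ = blockHom (p := p) m gA * dU := by rw [hdU]; group
    rw [this]
    exact mul_mem hφgA (Subgroup.subset_closure hdUmem)
  apply himp
  have : g₁ = uL⁻¹ * g₂ * uR⁻¹ := by rw [hg₂]; group
  rw [this]
  exact mul_mem (mul_mem (inv_mem hmemL) hg₂mem) (inv_mem hmemR)


lemma closure_map' {G H : Type*} [Group G] [Group H] (f : G →* H) (S : Set G) (Tt : Set H)
    (hf : ∀ s ∈ S, f s ∈ Subgroup.closure Tt) {g : G} (hg : g ∈ Subgroup.closure S) :
    f g ∈ Subgroup.closure Tt :=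
  (Subgroup.closure_le ((Subgroup.closure Tt).comap f)).mpr hf hg

section reindex
variable {ι κ : Type*} [Fintype ι] [DecidableEq ι] [Fintype κ] [DecidableEq κ]

/-- Reindexing on units of matrix rings. -/
noncomputable def matUnitsEquiv (f : ι ≃ κ) : (Matrix ι ι ℚ_[p])ˣ ≃* (Matrix κ κ ℚ_[p])ˣ :=
  Units.mapEquiv ((Matrix.reindexAlgEquiv ℚ_[p] ℚ_[p] f).toRingEquiv.toMulEquiv)

lemma matUnitsEquiv_coe (f : ι ≃ κ) (u : (Matrix ι ι ℚ_[p])ˣ) :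
    ((matUnitsEquiv (p := p) f u : (Matrix κ κ ℚ_[p])ˣ) : Matrix κ κ ℚ_[p]) =
      (u : Matrix ι ι ℚ_[p]).submatrix f.symm f.symm := rfl

lemma matUnitsEquiv_inv_coe (f : ι ≃ κ) (u : (Matrix ι ι ℚ_[p])ˣ) :
    (((matUnitsEquiv (p := p) f u)⁻¹ : (Matrix κ κ ℚ_[p])ˣ) : Matrix κ κ ℚ_[p]) =
      ((u⁻¹ : (Matrix ι ι ℚ_[p])ˣ) : Matrix ι ι ℚ_[p]).submatrix f.symm f.symm := by
  rw [← map_inv (matUnitsEquiv (p := p) f), matUnitsEquiv_coe]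

lemma matUnitsEquiv_int (f : ι ≃ κ) (u : (Matrix ι ι ℚ_[p])ˣ) (hu : u ∈ intSub ι) :
    matUnitsEquiv (p := p) f u ∈ intSub κ := by
  rw [mem_intSub_iff] at hu ⊢
  refine ⟨fun i j => ?_, fun i j => ?_⟩
  · rw [matUnitsEquiv_coe]; exact hu.1 _ _
  · rw [matUnitsEquiv_inv_coe]; exact hu.2 _ _

lemma matUnitsEquiv_T (f : ι ≃ κ) (u : (Matrix ι ι ℚ_[p])ˣ) (hu : u ∈ T (p := p) ι) :
    matUnitsEquiv (p := p) f u ∈ T (p := p) κ := by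
  rcases hu with ⟨i, j, c, hij, hc, hco⟩ | ⟨d, hd, hco⟩
  · refine Or.inl ⟨f i, f j, c, fun h => hij (f.injective h), hc, ?_⟩
    rw [matUnitsEquiv_coe, hco]
    have := TransvectionStruct.toMatrix_reindexEquiv f (⟨i, j, hij, c⟩ : TransvectionStruct ι ℚ_[p])
    simp only [TransvectionStruct.reindexEquiv, TransvectionStruct.toMatrix] at this
    rw [this, Matrix.reindexAlgEquiv_apply, Matrix.reindex_apply]
  · refine Or.inr ⟨d ∘ f.symm, fun i => hd _, ?_⟩
    rw [matUnitsEquiv_coe, hco, Matrix.submatrix_diagonal _ _ f.symm.injective]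

lemma matUnitsEquiv_symm_apply (f : ι ≃ κ) (u : (Matrix κ κ ℚ_[p])ˣ) :
    matUnitsEquiv (p := p) f ((matUnitsEquiv (p := p) f.symm) u) = u := by
  ext : 1
  rw [matUnitsEquiv_coe, matUnitsEquiv_coe]
  rw [Matrix.submatrix_submatrix]
  simp

end reindex

lemma main (m : ℕ) : ∀ (ι : Type) [Fintype ι] [DecidableEq ι], Fintype.card ι = m →
    ∀ g : (Matrix ι ι ℚ_[p])ˣ, g ∈ intSub ι → g ∈ Subgroup.closure (T (p := p) ι) := by
  induction m with
  | zero =>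
    intro ι _ _ hc g _
    have hempty : IsEmpty ι := Fintype.card_eq_zero_iff.mp hc
    have : g = 1 := by
      ext i j
      exact hempty.elim i
    rw [this]; exact one_mem _
  | succ m IH =>
    intro ι _ _ hc g hgi
    have e : Fin m ⊕ Unit ≃ ι := by
      apply Fintype.equivOfCardEq; simp [hc]
    have hstep := step m (fun h hh => IH (Fin m) (by simp) h hh)
      (matUnitsEquiv (p := p) e.symm g) (matUnitsEquiv_int e.symm g hgi)
    have := closure_map' (matUnitsEquiv (p := p) e).toMonoidHom _ _
      (fun s hs => Subgroup.subset_closure (matUnitsEquiv_T e s hs)) hstep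
    simpa [matUnitsEquiv_symm_apply] using this


section final
variable {ι : Type*} [Fintype ι] [DecidableEq ι]

lemma isGLZp_iff_mem_intSub (g : (Matrix ι ι ℚ_[p])ˣ) :
    IsGLZp (g : Matrix ι ι ℚ_[p]) ↔ g ∈ intSub ι := by
  rw [mem_intSub_iff]
  constructor
  · rintro ⟨h1, B, hB, hAB, hBA⟩
    exact ⟨h1, by rw [coe_inv_eq g B hAB]; exact hB⟩
  · rintro ⟨h1, h2⟩
    refine ⟨h1, _, h2, ?_, ?_⟩
    · rw [← Units.val_mul, mul_inv_cancel, Units.val_one]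
    · rw [← Units.val_mul, inv_mul_cancel, Units.val_one]

lemma isGLZp_transvection {i j : ι} (hij : i ≠ j) {c : ℚ_[p]} (hc : ‖c‖ ≤ 1) :
    IsGLZp (transvection i j c) := by
  refine ⟨isInt_transvection i j hc, transvection i j (-c),
    isInt_transvection i j (by rw [norm_neg]; exact hc), ?_, ?_⟩
  · rw [Matrix.transvection_mul_transvection_same _ _ hij, add_neg_cancel,
      Matrix.transvection_zero]
  · rw [Matrix.transvection_mul_transvection_same _ _ hij, neg_add_cancel,
      Matrix.transvection_zero]

lemma isGLZp_diagonal {d : ι → ℚ_[p]} (hd : ∀ i, ‖d i‖ = 1) :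
    IsGLZp (diagonal d) := by
  have hd0 : ∀ i, d i ≠ 0 := fun i hi => by
    have h := hd i; rw [hi] at h; simp at h
  have hbd : ∀ (e : ι → ℚ_[p]), (∀ i, ‖e i‖ = 1) → ∀ a b, ‖diagonal e a b‖ ≤ 1 := by
    intro e he a b
    rw [Matrix.diagonal_apply]
    split_ifs
    · exact le_of_eq (he a)
    · simp
  refine ⟨hbd d hd, diagonal (fun i => (d i)⁻¹),
    hbd _ (fun i => by rw [norm_inv, hd i]; norm_num), ?_, ?_⟩
  · rw [Matrix.diagonal_mul_diagonal,
      show (fun i => d i * (d i)⁻¹) = fun _ => (1 : ℚ_[p]) from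
        funext fun i => mul_inv_cancel₀ (hd0 i), Matrix.diagonal_one]
  · rw [Matrix.diagonal_mul_diagonal,
      show (fun i => (d i)⁻¹ * d i) = fun _ => (1 : ℚ_[p]) from
        funext fun i => inv_mul_cancel₀ (hd0 i), Matrix.diagonal_one]

end final

section J
variable {n : ℕ}

local notation "ι2" => (Fin n ⊕ Fin n)

lemma tr_inl_inr (a b : Fin n) (c : ℚ_[p]) :
    transvection (Sum.inl a : ι2) (Sum.inr b) c =
      fromBlocks 1 (single a b c) 0 1 := by
  ext x y
  rcases x with x | x <;> rcases y with y | y <;>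
    simp [Matrix.transvection, Matrix.add_apply, Matrix.one_apply, Matrix.single,
      Matrix.fromBlocks]

lemma tr_inr_inl (a b : Fin n) (c : ℚ_[p]) :
    transvection (Sum.inr a : ι2) (Sum.inl b) c =
      fromBlocks 1 0 (single a b c) 1 := by
  ext x y
  rcases x with x | x <;> rcases y with y | y <;>
    simp [Matrix.transvection, Matrix.add_apply, Matrix.one_apply, Matrix.single,
      Matrix.fromBlocks]

lemma tr_inr_inr (a b : Fin n) (c : ℚ_[p]) :
    transvection (Sum.inr a : ι2) (Sum.inr b) c =
      fromBlocks 1 0 0 (transvection a b c) := by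
  ext x y
  rcases x with x | x <;> rcases y with y | y <;>
    simp [Matrix.transvection, Matrix.add_apply, Matrix.one_apply, Matrix.single,
      Matrix.fromBlocks]

lemma tr_inl_inl (a b : Fin n) (c : ℚ_[p]) :
    transvection (Sum.inl a : ι2) (Sum.inl b) c =
      fromBlocks (transvection a b c) 0 0 1 := by
  ext x y
  rcases x with x | x <;> rcases y with y | y <;>
    simp [Matrix.transvection, Matrix.add_apply, Matrix.one_apply, Matrix.single,
      Matrix.fromBlocks]

lemma hJ2 : (fromBlocks 0 1 1 0 : Matrix ι2 ι2 ℚ_[p]) * fromBlocks 0 1 1 0 = 1 := by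
  rw [fromBlocks_multiply]
  simp [fromBlocks_one]

lemma hJconj (a b : Fin n) (c : ℚ_[p]) :
    (fromBlocks 0 1 1 0 : Matrix ι2 ι2 ℚ_[p]) * transvection (Sum.inl a) (Sum.inr b) c *
      fromBlocks 0 1 1 0 = transvection (Sum.inr a) (Sum.inl b) c := by
  rw [tr_inl_inr, tr_inr_inl, fromBlocks_multiply, fromBlocks_multiply]
  simp

lemma isInt_J : IsInt (fromBlocks 0 1 1 0 : Matrix ι2 ι2 ℚ_[p]) := by
  intro i j
  rcases i with a | a <;> rcases j with b | b <;>
    · simp only [Matrix.fromBlocks_apply₁₁, Matrix.fromBlocks_apply₁₂,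
        Matrix.fromBlocks_apply₂₁, Matrix.fromBlocks_apply₂₂]
      first
        | simp
        | (rw [Matrix.one_apply]; split_ifs <;> simp)

lemma isGLZp_J : IsGLZp (fromBlocks 0 1 1 0 : Matrix ι2 ι2 ℚ_[p]) :=
  ⟨isInt_J, fromBlocks 0 1 1 0, isInt_J, hJ2, hJ2⟩

end J


end GLGenAux

open GLGenAux

/-- `GL(2n, ℤ_p)` is generated by the block upper-triangular
subgroup `P` together with `J = [[0,1],[1,0]]`. -/
theorem GLZp_generated_by_parabolic_and_J (n : ℕ)
    (g : (Matrix (Fin n ⊕ Fin n) (Fin n ⊕ Fin n) ℚ_[p])ˣ) :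
    IsGLZp (g : Matrix (Fin n ⊕ Fin n) (Fin n ⊕ Fin n) ℚ_[p]) ↔
      g ∈ Subgroup.closure
        ({h : (Matrix (Fin n ⊕ Fin n) (Fin n ⊕ Fin n) ℚ_[p])ˣ |
            IsGLZp (h : Matrix (Fin n ⊕ Fin n) (Fin n ⊕ Fin n) ℚ_[p]) ∧
            ∃ a b d : Matrix (Fin n) (Fin n) ℚ_[p],
              (h : Matrix (Fin n ⊕ Fin n) (Fin n ⊕ Fin n) ℚ_[p]) =
                Matrix.fromBlocks a b 0 d} ∪
          {h : (Matrix (Fin n ⊕ Fin n) (Fin n ⊕ Fin n) ℚ_[p])ˣ |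
            (h : Matrix (Fin n ⊕ Fin n) (Fin n ⊕ Fin n) ℚ_[p]) =
              Matrix.fromBlocks 0 1 1 0}) := by
  set S : Set (Matrix (Fin n ⊕ Fin n) (Fin n ⊕ Fin n) ℚ_[p])ˣ :=
    ({h : (Matrix (Fin n ⊕ Fin n) (Fin n ⊕ Fin n) ℚ_[p])ˣ |
        IsGLZp (h : Matrix (Fin n ⊕ Fin n) (Fin n ⊕ Fin n) ℚ_[p]) ∧
        ∃ a b d : Matrix (Fin n) (Fin n) ℚ_[p],
          (h : Matrix (Fin n ⊕ Fin n) (Fin n ⊕ Fin n) ℚ_[p]) =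
            Matrix.fromBlocks a b 0 d} ∪
      {h : (Matrix (Fin n ⊕ Fin n) (Fin n ⊕ Fin n) ℚ_[p])ˣ |
        (h : Matrix (Fin n ⊕ Fin n) (Fin n ⊕ Fin n) ℚ_[p]) =
          Matrix.fromBlocks 0 1 1 0}) with hSdef
  have hTS : ∀ u ∈ T (p := p) (Fin n ⊕ Fin n), u ∈ Subgroup.closure S := by
    intro u hu
    rcases hu with ⟨i, j, c, hij, hc, hco⟩ | ⟨d, hd, hco⟩
    · rcases i with a | a <;> rcases j with b | b
      · apply Subgroup.subset_closure
        exact Or.inl ⟨hco ▸ isGLZp_transvection hij hc,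
          transvection a b c, 0, 1, by rw [hco, tr_inl_inl]⟩
      · apply Subgroup.subset_closure
        exact Or.inl ⟨hco ▸ isGLZp_transvection hij hc,
          1, single a b c, 1, by rw [hco, tr_inl_inr]⟩
      · have hab : (Sum.inl a : Fin n ⊕ Fin n) ≠ Sum.inr b := by simp
        set Ju : (Matrix (Fin n ⊕ Fin n) (Fin n ⊕ Fin n) ℚ_[p])ˣ :=
          ⟨fromBlocks 0 1 1 0, fromBlocks 0 1 1 0, hJ2, hJ2⟩ with hJu
        have hueq : u = Ju * tUnit hab c * Ju := by
          ext : 1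
          rw [Units.val_mul, Units.val_mul]
          show (u : Matrix (Fin n ⊕ Fin n) (Fin n ⊕ Fin n) ℚ_[p]) =
            fromBlocks 0 1 1 0 * transvection (Sum.inl a) (Sum.inr b) c * fromBlocks 0 1 1 0
          rw [hJconj, hco]
        rw [hueq]
        have hJmem : Ju ∈ S := Or.inr rfl
        have humem : tUnit hab c ∈ S := Or.inl ⟨isGLZp_transvection hab hc,
          1, single a b c, 1, tr_inl_inr a b c⟩
        exact mul_mem (mul_mem (Subgroup.subset_closure hJmem)
          (Subgroup.subset_closure humem)) (Subgroup.subset_closure hJmem)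
      · apply Subgroup.subset_closure
        exact Or.inl ⟨hco ▸ isGLZp_transvection hij hc,
          1, 0, transvection a b c, by rw [hco, tr_inr_inr]⟩
    · apply Subgroup.subset_closure
      refine Or.inl ⟨hco ▸ isGLZp_diagonal hd,
        diagonal (d ∘ Sum.inl), 0, diagonal (d ∘ Sum.inr), ?_⟩
      have hd' : d = Sum.elim (d ∘ Sum.inl) (d ∘ Sum.inr) := funext fun x => by
        cases x <;> rfl
      rw [hco]
      conv_lhs => rw [hd']
      rw [← Matrix.fromBlocks_diagonal]
  have hSint : S ⊆ (intSub (p := p) (Fin n ⊕ Fin n) : Set (Matrix (Fin n ⊕ Fin n) (Fin n ⊕ Fin n) ℚ_[p])ˣ) := by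
    rintro u (⟨hGL, -⟩ | hJ)
    · exact (isGLZp_iff_mem_intSub u).mp hGL
    · have hGL : IsGLZp (u : Matrix (Fin n ⊕ Fin n) (Fin n ⊕ Fin n) ℚ_[p]) := by
        rw [show (u : Matrix (Fin n ⊕ Fin n) (Fin n ⊕ Fin n) ℚ_[p]) = fromBlocks 0 1 1 0 from hJ]
        exact isGLZp_J
      exact (isGLZp_iff_mem_intSub u).mp hGL
  constructor
  · intro hGL
    have hmem := main (Fintype.card (Fin n ⊕ Fin n)) (Fin n ⊕ Fin n) rfl g
      ((isGLZp_iff_mem_intSub g).mp hGL)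
    exact (Subgroup.closure_le _).mpr hTS hmem
  · intro hmem
    exact (isGLZp_iff_mem_intSub g).mpr ((Subgroup.closure_le _).mpr hSint hmem)
end
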